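/- Let P be a probability measure on a measurable space Z, let g : Z → ℝ be a bounded measurable function, and let λ > 0. Define Z_λ = ∫ exp(g/λ) dP and the tilted probability measure Q* by dQ*/dP = exp(g/λ)/Z_λ. Then for every probability measure Q absolutely continuous with respect to P with KL(Q ‖ P) < ∞, we have ∫ g dQ − λ · KL(Q ‖ P) ≤ λ log Z_λ, with equality if and only if Q = Q*. -/

import Mathlib

/-! Write `f = g/λ` and `P^f` for the tilted measure `Q*`. Since `log dP^f/dP = f - log Z_λ`,
`∫ f dQ - KL(Q‖P) = log Z_λ - KL(Q‖P^f)` for every `Q` with `KL(Q‖P) < ∞`, and Gibbs'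
inequality `KL(Q‖P^f) ≥ 0`, with equality iff `Q = P^f`, gives both claims after scaling by `λ`. -/

open MeasureTheory Real
open scoped ENNReal Classical

/-- The Kullback–Leibler divergence `KL(Q ‖ P) = ∫ log (dQ/dP) dQ` when `Q ≪ P`
(and this integral exists), and `+∞` otherwise. -/
noncomputable def klDiv {Z : Type*} [MeasurableSpace Z] (Q P : Measure Z) : ℝ≥0∞ :=
  if Q ≪ P ∧ Integrable (fun z => Real.log (Q.rnDeriv P z).toReal) Q
  then ENNReal.ofReal (∫ z, Real.log (Q.rnDeriv P z).toReal ∂Q)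
  else ∞

lemma klDiv_eq_informationTheory_klDiv {α : Type*} [MeasurableSpace α] {μ ν : Measure α}
    (h : μ Set.univ = ν Set.univ) : klDiv μ ν = InformationTheory.klDiv μ ν := by
  simp [klDiv, InformationTheory.klDiv_def, llr_def, measureReal_def, h]

section GibbsVariational

variable {α : Type*} [MeasurableSpace α] {μ ν : Measure α}
  [IsProbabilityMeasure μ] [IsProbabilityMeasure ν] {f : α → ℝ}

lemma integral_sub_toReal_klDiv_eq_log_integral_exp_sub (hμν : μ ≪ ν) (hfμ : Integrable f μ)
    (hfν : Integrable (fun x ↦ exp (f x)) ν) (h_int : Integrable (llr μ ν) μ) :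
    ∫ x, f x ∂μ - (InformationTheory.klDiv μ ν).toReal
      = log (∫ x, exp (f x) ∂ν) - (InformationTheory.klDiv μ (ν.tilted f)).toReal := by
  have : IsProbabilityMeasure (ν.tilted f) := isProbabilityMeasure_tilted hfν
  rw [InformationTheory.toReal_klDiv_of_measure_eq hμν (by simp),
    InformationTheory.toReal_klDiv_of_measure_eq (hμν.trans (absolutelyContinuous_tilted hfν))
      (by simp), integral_llr_tilted_right hμν hfμ hfν h_int]
  ring

lemma integral_sub_toReal_klDiv_le_log_integral_exp (hμν : μ ≪ ν) (hfμ : Integrable f μ)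
    (hfν : Integrable (fun x ↦ exp (f x)) ν) (h_int : Integrable (llr μ ν) μ) :
    ∫ x, f x ∂μ - (InformationTheory.klDiv μ ν).toReal ≤ log (∫ x, exp (f x) ∂ν) := by
  rw [integral_sub_toReal_klDiv_eq_log_integral_exp_sub hμν hfμ hfν h_int]
  exact sub_le_self _ ENNReal.toReal_nonneg

lemma integral_sub_toReal_klDiv_eq_log_integral_exp_iff (hμν : μ ≪ ν) (hfμ : Integrable f μ)
    (hfν : Integrable (fun x ↦ exp (f x)) ν) (h_int : Integrable (llr μ ν) μ) :
    ∫ x, f x ∂μ - (InformationTheory.klDiv μ ν).toReal = log (∫ x, exp (f x) ∂ν)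
      ↔ μ = ν.tilted f := by
  have : IsProbabilityMeasure (ν.tilted f) := isProbabilityMeasure_tilted hfν
  have h_ne_top : InformationTheory.klDiv μ (ν.tilted f) ≠ ∞ :=
    InformationTheory.klDiv_ne_top (hμν.trans (absolutelyContinuous_tilted hfν))
      (integrable_llr_tilted_right hμν hfμ h_int hfν)
  rw [integral_sub_toReal_klDiv_eq_log_integral_exp_sub hμν hfμ hfν h_int, sub_eq_self,
    ENNReal.toReal_eq_zero_iff, or_iff_left h_ne_top, InformationTheory.klDiv_eq_zero_iff]

end GibbsVariational

/-- Gibbs' inequality: for every `Q ≪ P` with finite KL divergence,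
`∫ g dQ − λ·KL(Q‖P) ≤ λ log ∫ exp(g/λ) dP`, with equality iff `Q` is the
exponentially tilted measure `Q*` with `dQ*/dP = exp(g/λ)/Z_λ`. -/
theorem gibbs_inequality_tilted_measure
    {Z : Type*} [MeasurableSpace Z] (P : Measure Z) [IsProbabilityMeasure P]
    (g : Z → ℝ) (hg_meas : Measurable g) (M : ℝ) (hg_bdd : ∀ z, |g z| ≤ M)
    (lam : ℝ) (hlam : 0 < lam)
    (Zlam : ℝ) (hZ : Zlam = ∫ z, Real.exp (g z / lam) ∂P)
    (Qstar : Measure Z)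
    (hQstar : Qstar = P.withDensity
      (fun z => ENNReal.ofReal (Real.exp (g z / lam) / Zlam))) :
    ∀ Q : Measure Z, IsProbabilityMeasure Q → Q ≪ P → klDiv Q P < ∞ →
      (∫ z, g z ∂Q) - lam * (klDiv Q P).toReal ≤ lam * Real.log Zlam ∧
      ((∫ z, g z ∂Q) - lam * (klDiv Q P).toReal = lam * Real.log Zlam ↔ Q = Qstar) := by
  intro Q _ hQP hKL
  set f : Z → ℝ := fun z => g z / lam
  have hf_bdd : ∀ z, |f z| ≤ M / lam := fun z => by
    rw [abs_div, abs_of_pos hlam]; gcongr; exact hg_bdd z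
  have hfQ : Integrable f Q := .of_bound (hg_meas.div_const lam).aestronglyMeasurable _
    (ae_of_all _ hf_bdd)
  have hfP : Integrable (fun z => exp (f z)) P :=
    .of_bound (hg_meas.div_const lam).exp.aestronglyMeasurable (exp (M / lam))
      (ae_of_all _ fun z => by
        rw [norm_of_nonneg (exp_pos _).le]; exact exp_le_exp.2 (abs_le.1 (hf_bdd z)).2)
  have hKL_eq : klDiv Q P = InformationTheory.klDiv Q P :=
    klDiv_eq_informationTheory_klDiv (by simp)
  have h_int : Integrable (llr Q P) Q :=
    (InformationTheory.klDiv_ne_top_iff.1 (hKL_eq ▸ hKL.ne)).2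
  have hQstar_eq : Qstar = P.tilted f := by rw [hQstar, Measure.tilted, hZ]
  have h_scale : ∫ z, g z ∂Q - lam * (klDiv Q P).toReal
      = lam * (∫ z, f z ∂Q - (InformationTheory.klDiv Q P).toReal) := by
    rw [hKL_eq, integral_div, mul_sub, mul_div_cancel₀ _ hlam.ne']
  rw [h_scale, hZ, hQstar_eq, mul_right_inj' hlam.ne',
    integral_sub_toReal_klDiv_eq_log_integral_exp_iff hQP hfQ hfP h_int]
  exact ⟨mul_le_mul_of_nonneg_left
    (integral_sub_toReal_klDiv_le_log_integral_exp hQP hfQ hfP h_int) hlam.le, Iff.rfl⟩
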